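/- For all l ∈ ℕ, 0 ≤ k ≤ l, and z = x + iy with x,y ∈ ℝ, the product of real Hermite polynomials expands in complex Hermite polynomials as H_k(x) H_{l-k}(y) = i^{l-k} Σ_{m=0}^{l} √(m!(l-m)!/(2^l k!(l-k)!)) · (Σ_{r+s=m} binom(k,r) binom(l-k,s) (-1)^{s}) · J_{m,l-m}(z). -/

import Mathlib

open MeasureTheory Complex Filter Finset
open scoped Real ComplexConjugate

/-- The complex Hermite polynomial `J_{m,n}`. -/
noncomputable def J (m n : ℕ) (z : ℂ) : ℂ :=
  (Real.sqrt (m.factorial * n.factorial * 2 ^ (m + n)) : ℂ)⁻¹ *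
    ∑ r ∈ Finset.range (min m n + 1),
      (-1 : ℂ) ^ r * (r.factorial : ℂ) * 2 ^ r * (m.choose r : ℂ) * (n.choose r : ℂ) *
        z ^ (m - r) * (conj z) ^ (n - r)
/-- The `n`-th normalized real Hermite polynomial (as a function). -/
noncomputable def H (n : ℕ) (x : ℝ) : ℝ :=
  ((-1 : ℝ) ^ n / Real.sqrt n.factorial) * Real.exp (x ^ 2 / 2) *
    iteratedDeriv n (fun t : ℝ => Real.exp (-t ^ 2 / 2)) x

set_option maxRecDepth 8000

namespace HJaux

open Polynomial

/-! ### The Krawtchouk-type coefficients -/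

noncomputable def Kc (k n m : ℕ) : ℂ :=
  ∑ r ∈ Finset.range (m + 1),
    (k.choose r : ℂ) * (n.choose (m - r) : ℂ) * (-1 : ℂ) ^ (m - r)

lemma coeff_one_sub_X_pow (n k : ℕ) :
    ((1 - X : Polynomial ℂ) ^ n).coeff k = (-1 : ℂ) ^ k * (n.choose k : ℂ) := by
  have h : ((1 : Polynomial ℂ) - X) = (-X) + 1 := by ring
  rw [h, add_pow, finset_sum_coeff]
  have h2 : ∀ i ∈ Finset.range (n + 1),
      ((-X : Polynomial ℂ) ^ i * 1 ^ (n - i) * (n.choose i : Polynomial ℂ)).coeff k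
        = if i = k then (-1 : ℂ) ^ k * (n.choose k : ℂ) else 0 := by
    intro i _
    rw [one_pow, mul_one, neg_pow, ← C_eq_natCast, mul_assoc, mul_comm ((X : Polynomial ℂ) ^ i),
      ← mul_assoc, ← C_1, ← C_neg, ← C_pow, ← C_mul, coeff_C_mul, coeff_X_pow]
    by_cases hik : i = k
    · subst hik; simp
    · simp [hik, Ne.symm hik]
  rw [Finset.sum_congr rfl h2, Finset.sum_ite_eq' (Finset.range (n + 1)) k]
  by_cases hk : k ∈ Finset.range (n + 1)
  · simp [hk]
  · simp only [hk, if_false]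
    rw [Nat.choose_eq_zero_of_lt (by simpa using hk)]
    simp

lemma Kc_eq_coeff (k n m : ℕ) :
    (((1 + X) ^ k * (1 - X) ^ n : Polynomial ℂ)).coeff m = Kc k n m := by
  rw [coeff_mul, Nat.sum_antidiagonal_eq_sum_range_succ_mk]
  unfold Kc
  refine Finset.sum_congr rfl fun r hr => ?_
  rw [coeff_one_add_X_pow, coeff_one_sub_X_pow]
  ring

lemma Kc_zero (k n : ℕ) : Kc k n 0 = 1 := by simp [Kc]

lemma Kc_vanish (k n m : ℕ) (h : k + n < m) : Kc k n m = 0 := by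
  rw [← Kc_eq_coeff]
  apply coeff_eq_zero_of_natDegree_lt
  calc ((1 + X) ^ k * (1 - X) ^ n : Polynomial ℂ).natDegree
      ≤ ((1 + X : Polynomial ℂ) ^ k).natDegree + ((1 - X : Polynomial ℂ) ^ n).natDegree :=
        natDegree_mul_le
    _ ≤ k * (1 + X : Polynomial ℂ).natDegree + n * (1 - X : Polynomial ℂ).natDegree := by
        gcongr <;> exact natDegree_pow_le
    _ ≤ k * 1 + n * 1 := by
        gcongr
        · exact (natDegree_add_le _ _).trans (by simp)
        · exact (natDegree_sub_le _ _).trans (by simp)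
    _ < m := by omega

lemma Kc_pascal_add (k n m : ℕ) : Kc (k + 1) n (m + 1) = Kc k n (m + 1) + Kc k n m := by
  have h : ((1 + X) ^ (k + 1) * (1 - X) ^ n : Polynomial ℂ)
      = (1 + X) ^ k * (1 - X) ^ n + X * ((1 + X) ^ k * (1 - X) ^ n) := by ring
  have := congrArg (fun p => p.coeff (m + 1)) h
  simpa [Kc_eq_coeff, coeff_add, coeff_X_mul] using this

lemma Kc_pascal_sub (k n m : ℕ) : Kc k (n + 1) (m + 1) = Kc k n (m + 1) - Kc k n m := by
  have h : ((1 + X) ^ k * (1 - X) ^ (n + 1) : Polynomial ℂ)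
      = (1 + X) ^ k * (1 - X) ^ n - X * ((1 + X) ^ k * (1 - X) ^ n) := by ring
  have := congrArg (fun p => p.coeff (m + 1)) h
  simpa [Kc_eq_coeff, coeff_sub, coeff_X_mul] using this

lemma coeff_X_mul_derivative (Q : Polynomial ℂ) (m : ℕ) :
    (X * derivative Q).coeff m = m * Q.coeff m := by
  cases m with
  | zero => simp
  | succ m => rw [coeff_X_mul, coeff_derivative]; push_cast; ring

lemma poly_iii (k n : ℕ) :
    C ((k + n : ℕ) : ℂ) * ((1 + X) ^ k * (1 - X) ^ n)
      + (1 - X) * derivative ((1 + X) ^ k * (1 - X) ^ n)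
      = C ((2 * k : ℕ) : ℂ) * ((1 + X) ^ (k - 1) * (1 - X) ^ n) := by
  rw [derivative_mul, derivative_pow, derivative_pow]
  cases k with
  | zero => cases n with
    | zero => simp
    | succ n =>
      simp only [pow_zero, Nat.cast_zero, Nat.add_succ, Nat.zero_add, Nat.succ_sub_one,
        derivative_one, derivative_sub, derivative_X, derivative_one, zero_sub, Nat.zero_sub]
      simp only [map_natCast, map_zero, Nat.succ_eq_add_one, pow_succ]
      push_cast
      ring
  | succ k => cases n with
    | zero =>
      simp only [pow_zero, Nat.succ_sub_one, derivative_one, derivative_add, derivative_X,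
        derivative_one, zero_add, Nat.add_zero]
      simp only [map_natCast, map_zero, Nat.succ_eq_add_one, pow_succ]
      push_cast
      ring
    | succ n =>
      simp only [Nat.succ_sub_one, derivative_add, derivative_sub, derivative_X, derivative_one,
        zero_add, zero_sub]
      simp only [map_natCast, map_zero, Nat.succ_eq_add_one, pow_succ]
      push_cast
      ring

lemma poly_iv (k n : ℕ) :
    C ((k + n : ℕ) : ℂ) * ((1 + X) ^ k * (1 - X) ^ n)
      - (1 + X) * derivative ((1 + X) ^ k * (1 - X) ^ n)
      = C ((2 * n : ℕ) : ℂ) * ((1 + X) ^ k * (1 - X) ^ (n - 1)) := by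
  rw [derivative_mul, derivative_pow, derivative_pow]
  cases k with
  | zero => cases n with
    | zero => simp
    | succ n =>
      simp only [Nat.succ_sub_one, derivative_sub, derivative_X, derivative_one, zero_sub]
      simp only [map_natCast, map_zero, Nat.succ_eq_add_one, pow_succ]
      push_cast; ring
  | succ k => cases n with
    | zero =>
      simp only [Nat.succ_sub_one, derivative_add, derivative_X, derivative_one, zero_add]
      simp only [map_natCast, map_zero, Nat.succ_eq_add_one, pow_succ]
      push_cast; ring
    | succ n =>
      simp only [Nat.succ_sub_one, derivative_add, derivative_sub, derivative_X, derivative_one,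
        zero_add, zero_sub]
      simp only [map_natCast, map_zero, Nat.succ_eq_add_one, pow_succ]
      push_cast; ring

lemma Kc_iii (k n m : ℕ) :
    ((k + n : ℕ) : ℂ) * Kc k n m + ((m : ℂ) + 1) * Kc k n (m + 1) - (m : ℂ) * Kc k n m
      = ((2 * k : ℕ) : ℂ) * Kc (k - 1) n m := by
  have h := congrArg (fun p => p.coeff m) (poly_iii k n)
  simp only [coeff_add, coeff_C_mul, Kc_eq_coeff] at h
  have h1 : ((1 - X) * derivative ((1 + X) ^ k * (1 - X) ^ n) : Polynomial ℂ).coeff m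
      = ((m : ℂ) + 1) * Kc k n (m + 1) - (m : ℂ) * Kc k n m := by
    rw [sub_mul, one_mul, coeff_sub, coeff_X_mul_derivative, coeff_derivative, Kc_eq_coeff,
      Kc_eq_coeff]
    ring
  rw [h1] at h
  linear_combination h

lemma Kc_iv (k n m : ℕ) :
    ((k + n : ℕ) : ℂ) * Kc k n m - (((m : ℂ) + 1) * Kc k n (m + 1) + (m : ℂ) * Kc k n m)
      = ((2 * n : ℕ) : ℂ) * Kc k (n - 1) m := by
  have h := congrArg (fun p => p.coeff m) (poly_iv k n)
  simp only [coeff_sub, coeff_C_mul, Kc_eq_coeff] at h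
  have h1 : ((1 + X) * derivative ((1 + X) ^ k * (1 - X) ^ n) : Polynomial ℂ).coeff m
      = ((m : ℂ) + 1) * Kc k n (m + 1) + (m : ℂ) * Kc k n m := by
    rw [add_mul, one_mul, coeff_add, coeff_X_mul_derivative, coeff_derivative, Kc_eq_coeff,
      Kc_eq_coeff]
    ring
  rw [h1] at h
  linear_combination h

/-! ### The unnormalized complex Hermite polynomials -/

noncomputable def G (m n : ℕ) (z : ℂ) : ℂ :=
  ∑ r ∈ Finset.range (min m n + 1),
    (-1 : ℂ) ^ r * (r.factorial : ℂ) * 2 ^ r * (m.choose r : ℂ) * (n.choose r : ℂ) *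
      z ^ (m - r) * (conj z) ^ (n - r)

lemma G_eq (m n N : ℕ) (h : min m n ≤ N) (z : ℂ) :
    G m n z = ∑ r ∈ Finset.range (N + 1),
      (-1 : ℂ) ^ r * (r.factorial : ℂ) * 2 ^ r * (m.choose r : ℂ) * (n.choose r : ℂ) *
        z ^ (m - r) * (conj z) ^ (n - r) := by
  apply Finset.sum_subset
  · exact Finset.range_subset_range.2 (by omega)
  · intro r hr hr'
    simp only [Finset.mem_range, not_lt] at hr hr'
    have : m < r ∨ n < r := by
      rcases min_lt_iff.mp (show min m n < r by omega) with h | h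
      exacts [Or.inl h, Or.inr h]
    rcases this with h | h <;> simp [Nat.choose_eq_zero_of_lt h]

lemma conj_G (m n : ℕ) (z : ℂ) : conj (G m n z) = G n m z := by
  rw [G, G, min_comm n m, map_sum]
  refine Finset.sum_congr rfl fun r _ => ?_
  simp only [map_mul, map_pow, map_neg, map_one, map_ofNat, Complex.conj_conj,
    Complex.conj_natCast]
  ring

lemma z_mul_G (m n : ℕ) (z : ℂ) :
    z * G m n z = G (m + 1) n z + 2 * n * G m (n - 1) z := by
  cases n with
  | zero =>
    simp only [Nat.cast_zero, mul_zero, zero_mul, add_zero]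
    rw [G_eq m 0 0 (by omega), G_eq (m+1) 0 0 (by omega)]
    simp [pow_succ, mul_comm]
  | succ n =>
    rw [Nat.succ_sub_one]
    have hL : z * G m (n + 1) z = ∑ r ∈ Finset.range (m + 1 + 1),
        (-1 : ℂ) ^ r * (r.factorial : ℂ) * 2 ^ r * (m.choose r : ℂ) * ((n+1).choose r : ℂ) *
          z ^ (m + 1 - r) * (conj z) ^ (n + 1 - r) := by
      rw [G_eq m (n+1) (m+1) (by omega), Finset.mul_sum]
      refine Finset.sum_congr rfl fun r hr => ?_
      simp only [Finset.mem_range] at hr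
      by_cases hrm : r ≤ m
      · have : m + 1 - r = (m - r) + 1 := by omega
        rw [this, pow_succ]
        ring
      · have hr' : r = m + 1 := by omega
        subst hr'
        simp [Nat.choose_succ_self]
    rw [hL, G_eq (m+1) (n+1) (m+1) (by omega), G_eq m n m (by omega)]
    rw [← sub_eq_iff_eq_add']
    rw [← Finset.sum_sub_distrib, Finset.mul_sum, Finset.sum_range_succ']
    have h0 : ((-1 : ℂ) ^ 0 * (Nat.factorial 0 : ℂ) * 2 ^ 0 * (m.choose 0 : ℂ) *
        ((n+1).choose 0 : ℂ) * z ^ (m + 1 - 0) * (conj z) ^ (n + 1 - 0))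
        - ((-1 : ℂ) ^ 0 * (Nat.factorial 0 : ℂ) * 2 ^ 0 * ((m+1).choose 0 : ℂ) *
        ((n+1).choose 0 : ℂ) * z ^ (m + 1 - 0) * (conj z) ^ (n + 1 - 0)) = 0 := by
      simp
    rw [h0, add_zero]
    refine Finset.sum_congr rfl fun s hs => ?_
    have e1 : m + 1 - (s + 1) = m - s := by omega
    have e2 : n + 1 - (s + 1) = n - s := by omega
    rw [e1, e2]
    have hch : ((m.choose (s+1) : ℂ)) - ((m+1).choose (s+1) : ℂ) = -(m.choose s : ℂ) := by
      rw [Nat.choose_succ_succ m s]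
      push_cast
      ring
    have hkey : ((s + 1 : ℕ) : ℂ) * ((n+1).choose (s+1) : ℂ)
        = ((n + 1 : ℕ) : ℂ) * (n.choose s : ℂ) := by
      have h := Nat.add_one_mul_choose_eq n s
      have h2 := congrArg (fun t : ℕ => (t : ℂ)) h
      push_cast at h2 ⊢
      linear_combination -h2
    have hfac : ((s+1).factorial : ℂ) = ((s+1 : ℕ) : ℂ) * (s.factorial : ℂ) := by
      rw [Nat.factorial_succ]; push_cast; ring
    rw [hfac]
    push_cast at hkey ⊢
    linear_combination ((-1:ℂ)^s * (s.factorial : ℂ) * 2^s * 2 * (m.choose s : ℂ) * z ^ (m-s) *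
        (conj z)^(n-s)) * hkey
      + ((-1:ℂ)^(s+1) * ((s+1:ℂ)) * (s.factorial : ℂ) * 2^(s+1) * ((n+1).choose (s+1) : ℂ) *
        z ^ (m-s) * (conj z)^(n-s)) * hch

lemma conj_z_mul_G (m n : ℕ) (z : ℂ) :
    conj z * G m n z = G m (n + 1) z + 2 * m * G (m - 1) n z := by
  calc conj z * G m n z = conj (z * G n m z) := by rw [map_mul, conj_G]
    _ = conj (G (n + 1) m z + 2 * m * G n (m - 1) z) := by rw [z_mul_G]
    _ = G m (n + 1) z + 2 * m * G (m - 1) n z := by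
        simp only [map_add, map_mul, conj_G, map_ofNat, Complex.conj_natCast]

/-! ### The key recurrences for `S` -/

noncomputable def S (k n : ℕ) (z : ℂ) : ℂ :=
  ∑ m ∈ Finset.range (k + n + 1), Kc k n m * G m (k + n - m) z

lemma S_succ_expand (k' n : ℕ) (z : ℂ) (hK0 : Kc k' n 0 = 1) :
    S k' n z = (∑ s ∈ Finset.range (k' + n), Kc k' n (s + 1) * G (s + 1) (k' + n - (s + 1)) z)
      + G 0 (k' + n) z := by
  rw [S, Finset.sum_range_succ' (fun m => Kc k' n m * G m (k' + n - m) z) (k' + n)]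
  simp [hK0]

lemma hA2aux (k n : ℕ) (z : ℂ) :
    (∑ m ∈ Finset.range (k + n + 1), Kc k n m * G m (k + n + 1 - m) z)
      = (∑ s ∈ Finset.range (k + n + 1), Kc k n (s + 1) * G (s + 1) (k + n - s) z)
        + Kc k n 0 * G 0 (k + n + 1) z := by
  have hext : (∑ m ∈ Finset.range (k + n + 1), Kc k n m * G m (k + n + 1 - m) z)
      = ∑ m ∈ Finset.range (k + n + 1 + 1), Kc k n m * G m (k + n + 1 - m) z := by
    rw [Finset.sum_range_succ (fun m => Kc k n m * G m (k + n + 1 - m) z) (k + n + 1),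
      Kc_vanish k n (k + n + 1) (by omega), zero_mul, add_zero]
  rw [hext, Finset.sum_range_succ' (fun m => Kc k n m * G m (k + n + 1 - m) z) (k + n + 1)]
  congr 1
  refine Finset.sum_congr rfl fun s hs => ?_
  congr 2
  omega

lemma hA (k n : ℕ) (z : ℂ) :
    (∑ m ∈ Finset.range (k + n + 1), Kc k n m * G (m + 1) (k + n - m) z)
      + (∑ m ∈ Finset.range (k + n + 1), Kc k n m * G m (k + n + 1 - m) z)
      = S (k + 1) n z := by
  have e1 : k + 1 + n = k + n + 1 := by omega
  rw [S, e1, Finset.sum_range_succ' (fun m => Kc (k + 1) n m * G m (k + n + 1 - m) z) (k + n + 1)]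
  rw [hA2aux, Kc_zero]
  have : ∀ s ∈ Finset.range (k + n + 1),
      Kc (k + 1) n (s + 1) * G (s + 1) (k + n + 1 - (s + 1)) z
        = Kc k n s * G (s + 1) (k + n - s) z + Kc k n (s + 1) * G (s + 1) (k + n - s) z := by
    intro s hs
    have e2 : k + n + 1 - (s + 1) = k + n - s := by omega
    rw [e2, Kc_pascal_add]
    ring
  rw [Finset.sum_congr rfl this, Finset.sum_add_distrib, Kc_zero]
  simp only [Nat.sub_zero]
  ring

lemma hB (k n : ℕ) (z : ℂ) :
    (∑ m ∈ Finset.range (k + n + 1), Kc k n m * (2 * ((k + n - m : ℕ) : ℂ)) * G m (k + n - m - 1) z)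
      + (∑ m ∈ Finset.range (k + n + 1), Kc k n m * (2 * (m : ℂ)) * G (m - 1) (k + n - m) z)
      = 4 * k * S (k - 1) n z := by
  -- reduce second sum via sum_range_succ' (first term vanishes)
  have h2 : (∑ m ∈ Finset.range (k + n + 1), Kc k n m * (2 * (m : ℂ)) * G (m - 1) (k + n - m) z)
      = ∑ s ∈ Finset.range (k + n), Kc k n (s + 1) * (2 * ((s : ℂ) + 1)) * G s (k + n - s - 1) z := by
    rw [Finset.sum_range_succ' (fun m => Kc k n m * (2 * (m : ℂ)) * G (m - 1) (k + n - m) z) (k + n)]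
    simp only [Nat.cast_zero, mul_zero, zero_mul, add_zero, Nat.cast_ofNat, Nat.add_sub_cancel]
    refine Finset.sum_congr rfl fun s hs => ?_
    have e1 : s + 1 - 1 = s := by omega
    have e2 : k + n - (s + 1) = k + n - s - 1 := by omega
    rw [e2]
    push_cast
    ring
  -- reduce first sum by dropping the last (vanishing) term
  have h1 : (∑ m ∈ Finset.range (k + n + 1), Kc k n m * (2 * ((k + n - m : ℕ) : ℂ)) * G m (k + n - m - 1) z)
      = ∑ m ∈ Finset.range (k + n), Kc k n m * (2 * ((k + n - m : ℕ) : ℂ)) * G m (k + n - m - 1) z := by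
    rw [Finset.sum_range_succ]
    simp
  rw [h1, h2, ← Finset.sum_add_distrib]
  have key : ∀ m ∈ Finset.range (k + n),
      Kc k n m * (2 * ((k + n - m : ℕ) : ℂ)) * G m (k + n - m - 1) z
        + Kc k n (m + 1) * (2 * ((m : ℂ) + 1)) * G m (k + n - m - 1) z
      = 4 * k * (Kc (k - 1) n m * G m (k + n - m - 1) z) := by
    intro m hm
    have hmlt : m < k + n := Finset.mem_range.mp hm
    have hc : ((k + n - m : ℕ) : ℂ) = ((k + n : ℕ) : ℂ) - (m : ℂ) := by
      push_cast [Nat.cast_sub hmlt.le]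
      ring
    have hiii := Kc_iii k n m
    rw [hc]
    have h2k : ((2 * k : ℕ) : ℂ) = 2 * (k : ℂ) := by push_cast; ring
    rw [h2k] at hiii
    linear_combination (2 * G m (k + n - m - 1) z) * hiii
  rw [Finset.sum_congr rfl key]
  cases k with
  | zero => simp
  | succ k' =>
    rw [← Finset.mul_sum, S]
    have e1 : k' + 1 - 1 = k' := by omega
    have e2 : k' + 1 + n = k' + n + 1 := by omega
    rw [e1, e2]
    congr 1
    refine Finset.sum_congr rfl fun m hm => ?_
    congr 2
    omega

lemma claimX (k n : ℕ) (z : ℂ) :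
    (z + conj z) * S k n z = S (k + 1) n z + 4 * k * S (k - 1) n z := by
  have hLHS : (z + conj z) * S k n z
      = ((∑ m ∈ Finset.range (k + n + 1), Kc k n m * G (m + 1) (k + n - m) z)
      + (∑ m ∈ Finset.range (k + n + 1), Kc k n m * G m (k + n + 1 - m) z))
      + ((∑ m ∈ Finset.range (k + n + 1), Kc k n m * (2 * ((k + n - m : ℕ) : ℂ)) * G m (k + n - m - 1) z)
      + (∑ m ∈ Finset.range (k + n + 1), Kc k n m * (2 * (m : ℂ)) * G (m - 1) (k + n - m) z)) := by
    rw [S, Finset.mul_sum, ← Finset.sum_add_distrib, ← Finset.sum_add_distrib,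
      ← Finset.sum_add_distrib]
    refine Finset.sum_congr rfl fun m hm => ?_
    have hmm : m ≤ k + n := by
      have := Finset.mem_range.mp hm; omega
    have hz := z_mul_G m (k + n - m) z
    have hzc := conj_z_mul_G m (k + n - m) z
    have e : k + n - m + 1 = k + n + 1 - m := by omega
    rw [e] at hzc
    calc (z + conj z) * (Kc k n m * G m (k + n - m) z)
        = Kc k n m * (z * G m (k + n - m) z) + Kc k n m * (conj z * G m (k + n - m) z) := by
          ring
      _ = _ := by rw [hz, hzc]; ring
  rw [hLHS, hA, hB]

lemma hA' (k n : ℕ) (z : ℂ) :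
    (∑ m ∈ Finset.range (k + n + 1), Kc k n m * G (m + 1) (k + n - m) z)
      - (∑ m ∈ Finset.range (k + n + 1), Kc k n m * G m (k + n + 1 - m) z)
      = - S k (n + 1) z := by
  have e1 : k + (n + 1) = k + n + 1 := by omega
  rw [S, e1, Finset.sum_range_succ' (fun m => Kc k (n + 1) m * G m (k + n + 1 - m) z) (k + n + 1)]
  rw [hA2aux, Kc_zero]
  have : ∀ s ∈ Finset.range (k + n + 1),
      Kc k (n + 1) (s + 1) * G (s + 1) (k + n + 1 - (s + 1)) z
        = Kc k n (s + 1) * G (s + 1) (k + n - s) z - Kc k n s * G (s + 1) (k + n - s) z := by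
    intro s hs
    have e2 : k + n + 1 - (s + 1) = k + n - s := by omega
    rw [e2, Kc_pascal_sub]
    ring
  rw [Finset.sum_congr rfl this, Finset.sum_sub_distrib, Kc_zero]
  simp only [Nat.sub_zero]
  ring

lemma hB' (k n : ℕ) (z : ℂ) :
    (∑ m ∈ Finset.range (k + n + 1), Kc k n m * (2 * ((k + n - m : ℕ) : ℂ)) * G m (k + n - m - 1) z)
      - (∑ m ∈ Finset.range (k + n + 1), Kc k n m * (2 * (m : ℂ)) * G (m - 1) (k + n - m) z)
      = 4 * n * S k (n - 1) z := by
  have h2 : (∑ m ∈ Finset.range (k + n + 1), Kc k n m * (2 * (m : ℂ)) * G (m - 1) (k + n - m) z)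
      = ∑ s ∈ Finset.range (k + n), Kc k n (s + 1) * (2 * ((s : ℂ) + 1)) * G s (k + n - s - 1) z := by
    rw [Finset.sum_range_succ' (fun m => Kc k n m * (2 * (m : ℂ)) * G (m - 1) (k + n - m) z) (k + n)]
    simp only [Nat.cast_zero, mul_zero, zero_mul, add_zero, Nat.cast_ofNat, Nat.add_sub_cancel]
    refine Finset.sum_congr rfl fun s hs => ?_
    have e2 : k + n - (s + 1) = k + n - s - 1 := by omega
    rw [e2]
    push_cast
    ring
  have h1 : (∑ m ∈ Finset.range (k + n + 1), Kc k n m * (2 * ((k + n - m : ℕ) : ℂ)) * G m (k + n - m - 1) z)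
      = ∑ m ∈ Finset.range (k + n), Kc k n m * (2 * ((k + n - m : ℕ) : ℂ)) * G m (k + n - m - 1) z := by
    rw [Finset.sum_range_succ]
    simp
  rw [h1, h2, ← Finset.sum_sub_distrib]
  have key : ∀ m ∈ Finset.range (k + n),
      Kc k n m * (2 * ((k + n - m : ℕ) : ℂ)) * G m (k + n - m - 1) z
        - Kc k n (m + 1) * (2 * ((m : ℂ) + 1)) * G m (k + n - m - 1) z
      = 4 * n * (Kc k (n - 1) m * G m (k + n - m - 1) z) := by
    intro m hm
    have hmlt : m < k + n := Finset.mem_range.mp hm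
    have hc : ((k + n - m : ℕ) : ℂ) = ((k + n : ℕ) : ℂ) - (m : ℂ) := by
      push_cast [Nat.cast_sub hmlt.le]
      ring
    have hiv := Kc_iv k n m
    rw [hc]
    have h2n : ((2 * n : ℕ) : ℂ) = 2 * (n : ℂ) := by push_cast; ring
    rw [h2n] at hiv
    linear_combination (2 * G m (k + n - m - 1) z) * hiv
  rw [Finset.sum_congr rfl key]
  cases n with
  | zero => simp
  | succ n' =>
    rw [← Finset.mul_sum, S]
    have e1 : n' + 1 - 1 = n' := by omega
    have e2 : k + (n' + 1) = k + n' + 1 := by omega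
    rw [e1, e2]
    congr 1
    refine Finset.sum_congr rfl fun m hm => ?_
    congr 2
    omega

lemma claimY (k n : ℕ) (z : ℂ) :
    (z - conj z) * S k n z = 4 * n * S k (n - 1) z - S k (n + 1) z := by
  have hLHS : (z - conj z) * S k n z
      = ((∑ m ∈ Finset.range (k + n + 1), Kc k n m * G (m + 1) (k + n - m) z)
      - (∑ m ∈ Finset.range (k + n + 1), Kc k n m * G m (k + n + 1 - m) z))
      + ((∑ m ∈ Finset.range (k + n + 1), Kc k n m * (2 * ((k + n - m : ℕ) : ℂ)) * G m (k + n - m - 1) z)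
      - (∑ m ∈ Finset.range (k + n + 1), Kc k n m * (2 * (m : ℂ)) * G (m - 1) (k + n - m) z)) := by
    rw [S, Finset.mul_sum, ← Finset.sum_sub_distrib, ← Finset.sum_sub_distrib,
      ← Finset.sum_add_distrib]
    refine Finset.sum_congr rfl fun m hm => ?_
    have hmm : m ≤ k + n := by
      have := Finset.mem_range.mp hm; omega
    have hz := z_mul_G m (k + n - m) z
    have hzc := conj_z_mul_G m (k + n - m) z
    have e : k + n - m + 1 = k + n + 1 - m := by omega
    rw [e] at hzc
    calc (z - conj z) * (Kc k n m * G m (k + n - m) z)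
        = Kc k n m * (z * G m (k + n - m) z) - Kc k n m * (conj z * G m (k + n - m) z) := by
          ring
      _ = _ := by rw [hz, hzc]; ring
  rw [hLHS, hA', hB']
  ring

/-! ### Hermite polynomial facts -/

lemma derivative_hermite_succ (n : ℕ) :
    derivative (hermite (n + 1)) = C ((n : ℤ) + 1) * hermite n := by
  induction n with
  | zero => simp [hermite_one, hermite_zero]
  | succ n ih =>
    have h2 : derivative (hermite n) = X * hermite n - hermite (n + 1) := by
      rw [hermite_succ n]; ring
    rw [hermite_succ (n + 1), derivative_sub, derivative_mul, derivative_X, one_mul, ih,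
      derivative_mul, derivative_C, zero_mul, zero_add, h2]
    simp only [map_add, map_one, map_natCast, map_ofNat]
    push_cast
    ring

lemma aeval_hermite_rec (n : ℕ) (y : ℝ) :
    (aeval y (hermite (n + 2)) : ℝ)
      = y * aeval y (hermite (n + 1)) - ((n : ℝ) + 1) * aeval y (hermite n) := by
  rw [hermite_succ (n + 1), map_sub, map_mul, aeval_X, derivative_hermite_succ, map_mul, aeval_C]
  push_cast
  ring

lemma H_eq_aeval (n : ℕ) (x : ℝ) :
    H n x = aeval x (hermite n) / Real.sqrt n.factorial := by
  rw [H]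
  have hfun : (fun t : ℝ => Real.exp (-t ^ 2 / 2)) = fun t : ℝ => Real.exp (-(t ^ 2 / 2)) := by
    funext t; norm_num [neg_div]
  rw [hfun, iteratedDeriv_eq_iterate, deriv_gaussian_eq_hermite_mul_gaussian]
  have h1 : ((-1 : ℝ) ^ n) * ((-1 : ℝ) ^ n) = 1 := by
    rw [← mul_pow]; norm_num
  have h2 : Real.exp (x ^ 2 / 2) * Real.exp (-(x ^ 2 / 2)) = 1 := by
    rw [← Real.exp_add]; norm_num
  linear_combination (aeval x (hermite n) / Real.sqrt n.factorial) * h1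
    + (aeval x (hermite n) * ((-1 : ℝ) ^ n * (-1 : ℝ) ^ n) / Real.sqrt n.factorial) * h2

/-! ### The main induction -/

def Q (k n : ℕ) : Prop := ∀ x y : ℝ,
  (2 : ℂ) ^ (k + n) * ((aeval x (hermite k) : ℝ) : ℂ) * ((aeval y (hermite n) : ℝ) : ℂ)
    = Complex.I ^ n * S k n ((x : ℂ) + (y : ℂ) * Complex.I)

lemma conj_z (x y : ℝ) :
    conj ((x : ℂ) + (y : ℂ) * Complex.I) = (x : ℂ) - (y : ℂ) * Complex.I := by
  rw [map_add, map_mul, Complex.conj_ofReal, Complex.conj_ofReal, Complex.conj_I]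
  ring

lemma Q00 : Q 0 0 := by
  intro x y
  simp [S, Kc, G, Polynomial.hermite_zero]

lemma step_x1 (n : ℕ) (h : Q 0 n) : Q 1 n := by
  intro x y
  have hq := h x y
  have hX := claimX 0 n ((x : ℂ) + (y : ℂ) * Complex.I)
  rw [conj_z] at hX
  simp only [Nat.cast_zero, mul_zero, zero_mul, add_zero, Nat.zero_sub, zero_add,
    CharP.cast_eq_zero] at hX hq
  have e1 : (2 : ℂ) ^ (1 + n) = 2 * 2 ^ n := by rw [pow_add, pow_one]
  rw [e1]
  simp only [Polynomial.hermite_one, Polynomial.aeval_X, Polynomial.hermite_zero, map_one,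
    Polynomial.aeval_one, Complex.ofReal_one, mul_one] at hq ⊢
  linear_combination (2 * (x : ℂ)) * hq + Complex.I ^ n * hX

lemma step_x2 (k n : ℕ) (h0 : Q k n) (h1 : Q (k + 1) n) : Q (k + 2) n := by
  intro x y
  have hq0 := h0 x y
  have hq1 := h1 x y
  have hX := claimX (k + 1) n ((x : ℂ) + (y : ℂ) * Complex.I)
  rw [conj_z] at hX
  simp only [Nat.add_sub_cancel] at hX
  norm_num at hX
  have hrec := congrArg (fun t : ℝ => (t : ℂ)) (aeval_hermite_rec k x)
  push_cast at hrec
  have e2 : (2 : ℂ) ^ (k + 2 + n) = 2 ^ (k + n) * 4 := by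
    have : k + 2 + n = (k + n) + 2 := by omega
    rw [this, pow_add]; norm_num
  have e1 : (2 : ℂ) ^ (k + 1 + n) = 2 ^ (k + n) * 2 := by
    have : k + 1 + n = (k + n) + 1 := by omega
    rw [this, pow_add]; norm_num
  rw [e1] at hq1
  rw [e2, hrec]
  linear_combination (2 * (x : ℂ)) * hq1 - (4 * ((k : ℂ) + 1)) * hq0 + Complex.I ^ n * hX

lemma step_y1 (k : ℕ) (h : Q k 0) : Q k 1 := by
  intro x y
  have hq := h x y
  have hY := claimY k 0 ((x : ℂ) + (y : ℂ) * Complex.I)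
  rw [conj_z] at hY
  simp only [Nat.cast_zero, mul_zero, zero_mul, Nat.zero_sub, zero_sub, add_zero,
    CharP.cast_eq_zero] at hY hq
  norm_num at hY
  have e1 : (2 : ℂ) ^ (k + 1) = 2 ^ k * 2 := by rw [pow_add, pow_one]
  rw [e1]
  simp only [Polynomial.hermite_one, Polynomial.aeval_X, Polynomial.hermite_zero, map_one,
    Polynomial.aeval_one, Complex.ofReal_one, mul_one, pow_zero, pow_one, one_mul] at hq ⊢
  have hII : Complex.I * Complex.I = -1 := Complex.I_mul_I
  linear_combination (2 * (y : ℂ)) * hq - Complex.I * hY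
    + (2 * (y : ℂ) * S k 0 ((x : ℂ) + (y : ℂ) * Complex.I)) * hII

lemma step_y2 (k n : ℕ) (h0 : Q k n) (h1 : Q k (n + 1)) : Q k (n + 2) := by
  intro x y
  have hq0 := h0 x y
  have hq1 := h1 x y
  have hY := claimY k (n + 1) ((x : ℂ) + (y : ℂ) * Complex.I)
  rw [conj_z] at hY
  simp only [Nat.add_sub_cancel] at hY
  norm_num at hY
  have hrec := congrArg (fun t : ℝ => (t : ℂ)) (aeval_hermite_rec n y)
  push_cast at hrec
  have e2 : (2 : ℂ) ^ (k + (n + 2)) = 2 ^ (k + n) * 4 := by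
    have : k + (n + 2) = (k + n) + 2 := by omega
    rw [this, pow_add]; norm_num
  have e1 : (2 : ℂ) ^ (k + (n + 1)) = 2 ^ (k + n) * 2 := by
    have : k + (n + 1) = (k + n) + 1 := by omega
    rw [this, pow_add]; norm_num
  have eI2 : Complex.I ^ (n + 2) = -(Complex.I ^ n) := by
    rw [pow_add, Complex.I_sq]; ring
  have eI1 : Complex.I ^ (n + 1) = Complex.I ^ n * Complex.I := by rw [pow_add, pow_one]
  rw [e1, eI1] at hq1
  rw [e2, eI2, hrec]
  linear_combination (2 * (y : ℂ)) * hq1 - (4 * ((n : ℂ) + 1)) * hq0 + Complex.I ^ n * hY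

lemma Qmain : ∀ k n : ℕ, Q k n := by
  have hcol : ∀ n, Q 0 n := by
    have h : ∀ n, Q 0 n ∧ Q 0 (n + 1) := by
      intro n
      induction n with
      | zero => exact ⟨Q00, step_y1 0 Q00⟩
      | succ n ih => exact ⟨ih.2, step_y2 0 n ih.1 ih.2⟩
    exact fun n => (h n).1
  have h : ∀ k, (∀ n, Q k n) ∧ (∀ n, Q (k + 1) n) := by
    intro k
    induction k with
    | zero => exact ⟨hcol, fun n => step_x1 n (hcol n)⟩
    | succ k ih => exact ⟨ih.2, fun n => step_x2 k n (ih.1 n) (ih.2 n)⟩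
  exact fun k => (h k).1

end HJaux

namespace HJaux

lemma scal (L : ℕ) (a c d : ℝ) (ha : 0 < a) (hc : 0 < c) (hd : 0 < d) :
    Real.sqrt (a / (2 ^ L * c * d)) * (Real.sqrt (a * 2 ^ L))⁻¹
      = ((2 : ℝ) ^ L * Real.sqrt (c * d))⁻¹ := by
  have h2 : (0 : ℝ) < 2 ^ L := by positivity
  rw [mul_assoc, Real.sqrt_div ha.le, Real.sqrt_mul h2.le, Real.sqrt_mul hc.le,
    Real.sqrt_mul ha.le]
  have h2' : Real.sqrt (2 ^ L) * Real.sqrt (2 ^ L) = 2 ^ L := Real.mul_self_sqrt h2.le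
  have sa : Real.sqrt a ≠ 0 := by positivity
  have s2 : Real.sqrt (2 ^ L) ≠ 0 := by positivity
  have sc : Real.sqrt c ≠ 0 := by positivity
  have sd : Real.sqrt d ≠ 0 := by positivity
  have hcd : (0 : ℝ) < c * d := by positivity
  field_simp
  linear_combination -h2'

end HJaux

/-- Expansion of products of real Hermite polynomials in complex Hermite polynomials. -/
theorem H_expand_in_J (l k : ℕ) (hk : k ≤ l) (x y : ℝ) :
    (H k x : ℂ) * (H (l - k) y : ℂ)
      = Complex.I ^ (l - k) *
          ∑ m ∈ Finset.range (l + 1),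
            (Real.sqrt ((m.factorial * (l - m).factorial : ℝ) /
              (2 ^ l * k.factorial * (l - k).factorial)) : ℂ) *
            (∑ r ∈ Finset.range (m + 1),
              (k.choose r : ℂ) * ((l - k).choose (m - r) : ℂ) * (-1 : ℂ) ^ (m - r)) *
            J m (l - m) (x + y * Complex.I) := by
  classical
  have hkn : k + (l - k) = l := by omega
  have hmain := HJaux.Qmain k (l - k) x y
  rw [hkn] at hmain
  have hsum : ∀ m ∈ Finset.range (l + 1),
      (Real.sqrt ((m.factorial * (l - m).factorial : ℝ) /
          (2 ^ l * k.factorial * (l - k).factorial)) : ℂ) *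
        (∑ r ∈ Finset.range (m + 1),
          (k.choose r : ℂ) * ((l - k).choose (m - r) : ℂ) * (-1 : ℂ) ^ (m - r)) *
        J m (l - m) ((x : ℂ) + (y : ℂ) * Complex.I)
      = (((2 : ℝ) ^ l * Real.sqrt ((k.factorial : ℝ) * ((l - k).factorial : ℝ)))⁻¹ : ℝ) *
          (HJaux.Kc k (l - k) m * HJaux.G m (l - m) ((x : ℂ) + (y : ℂ) * Complex.I)) := by
    intro m hm
    have hml : m ≤ l := by
      have := Finset.mem_range.mp hm; omega
    have hJ : J m (l - m) ((x : ℂ) + (y : ℂ) * Complex.I)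
        = (Real.sqrt ((m.factorial : ℝ) * ((l - m).factorial : ℝ) * 2 ^ (m + (l - m))) : ℂ)⁻¹ *
          HJaux.G m (l - m) ((x : ℂ) + (y : ℂ) * Complex.I) := rfl
    have hK : (∑ r ∈ Finset.range (m + 1),
        (k.choose r : ℂ) * ((l - k).choose (m - r) : ℂ) * (-1 : ℂ) ^ (m - r))
        = HJaux.Kc k (l - k) m := rfl
    rw [hJ, hK]
    have hmm : m + (l - m) = l := by omega
    rw [hmm]
    have hscal := HJaux.scal l ((m.factorial : ℝ) * ((l - m).factorial : ℝ))
      (k.factorial : ℝ) ((l - k).factorial : ℝ)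
      (by positivity) (by exact_mod_cast Nat.factorial_pos k)
      (by exact_mod_cast Nat.factorial_pos (l - k))
    have hcast := congrArg (fun t : ℝ => (t : ℂ)) hscal
    push_cast at hcast
    push_cast
    linear_combination (HJaux.Kc k (l - k) m *
      HJaux.G m (l - m) ((x : ℂ) + (y : ℂ) * Complex.I)) * hcast
  rw [Finset.sum_congr rfl hsum, ← Finset.mul_sum]
  have hS : HJaux.S k (l - k) ((x : ℂ) + (y : ℂ) * Complex.I)
      = ∑ m ∈ Finset.range (l + 1),
          HJaux.Kc k (l - k) m * HJaux.G m (l - m) ((x : ℂ) + (y : ℂ) * Complex.I) := by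
    rw [HJaux.S, hkn]
  rw [← hS, HJaux.H_eq_aeval, HJaux.H_eq_aeval]
  have hfac : ((2 : ℝ) ^ l * Real.sqrt ((k.factorial : ℝ) * ((l - k).factorial : ℝ)))⁻¹ * 2 ^ l
      = (Real.sqrt (k.factorial : ℝ))⁻¹ * (Real.sqrt ((l - k).factorial : ℝ))⁻¹ := by
    rw [Real.sqrt_mul (by positivity : (0 : ℝ) ≤ (k.factorial : ℝ))]
    have h1 : Real.sqrt (k.factorial : ℝ) ≠ 0 := by
      have := Nat.factorial_pos k; positivity
    have h2 : Real.sqrt ((l - k).factorial : ℝ) ≠ 0 := by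
      have := Nat.factorial_pos (l - k); positivity
    have h3 : ((2 : ℝ) ^ l) ≠ 0 := by positivity
    field_simp
  have hfacC := congrArg (fun t : ℝ => (t : ℂ)) hfac
  push_cast at hfacC
  push_cast
  linear_combination ((2 ^ l * (Real.sqrt ((k.factorial : ℝ) * ((l - k).factorial : ℝ)) : ℂ)) : ℂ)⁻¹ * hmain
    - (((Polynomial.aeval x (Polynomial.hermite k) : ℝ) : ℂ) *
      ((Polynomial.aeval y (Polynomial.hermite (l - k)) : ℝ) : ℂ)) * hfacC
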